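/- arXiv:1406.6725 — 2 statements merged into one kernel-verified Lean document; each statement's English description precedes it below -/
import Mathlib

section
/- In the real space c₀ of sequences (indexed by integers i ≥ 1) converging to 0 with the supremum norm, for each integer n ≥ 1 define a_n^+ = {x ∈ c₀ : |x_i| ≤ (1/2)(1 + 1/i) for all i ≥ 1, and x_n = (1/2)(1 + 1/n)} and a_n^- = {x ∈ c₀ : |x_i| ≤ (1/2)(1 + 1/i) for all i ≥ 1, and x_n = −(1/2)(1 + 1/n)}. Then each a_n^± is a nonempty closed convex subset of the closed unit ball of c₀, and for every ε with 0 ≤ ε ≤ 1/2 the ε-enlargements (a_n^+)^ε and (a_n^-)^ε are disjoint; in particular a_n^+ ∩ a_n^- = ∅ for every n. -/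
/-! `aₙ⁺` and `aₙ⁻` are cut out by coordinate constraints, so they are closed and
convex, and they contain the vectors `±(1/2)(1 + 1/n) eₙ`. Comparing `n`-th coordinates, any
`x ∈ aₙ⁺` and `y ∈ aₙ⁻` are at distance at least `1 + 1/n > 1 ≥ 2ε`, so no point can lie within
`ε` of both sets. -/

open Metric ZeroAtInfty

noncomputable def enl {X : Type*} [NormedAddCommGroup X] (A : Set X) (ε : ℝ) : Set X :=
  {x : X | infDist x A ≤ ε}

noncomputable def aSgn (s : ℝ) (n : ℕ+) : Set C₀(ℕ+, ℝ) :=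
  {x | (∀ i : ℕ+, |x i| ≤ (1 / 2) * (1 + 1 / (i : ℝ))) ∧
    x n = s * ((1 / 2) * (1 + 1 / (n : ℝ)))}

section Enlargement

lemma le_infDist_add_infDist {X : Type*} [PseudoMetricSpace X] {A B : Set X} {d : ℝ}
    (hA : A.Nonempty) (hB : B.Nonempty) (hAB : ∀ a ∈ A, ∀ b ∈ B, d ≤ dist a b) (z : X) :
    d ≤ infDist z A + infDist z B := by
  have h : d - infDist z B ≤ infDist z A := by
    refine (le_infDist hA).2 fun a ha => ?_
    have hdB : d ≤ infDist a B := (le_infDist hB).2 (hAB a ha)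
    have htri : infDist a B ≤ infDist z B + dist a z := infDist_le_infDist_add_dist
    rw [dist_comm] at htri
    linarith
  linarith

variable {X : Type*} [NormedAddCommGroup X]

lemma subset_enl {A : Set X} {ε : ℝ} (hε : 0 ≤ ε) : A ⊆ enl A ε :=
  fun _ hx => (infDist_zero_of_mem hx).trans_le hε

lemma enl_inter_enl_eq_empty {A B : Set X} {d ε : ℝ} (hA : A.Nonempty) (hB : B.Nonempty)
    (hAB : ∀ a ∈ A, ∀ b ∈ B, d ≤ dist a b) (hε : 2 * ε < d) : enl A ε ∩ enl B ε = ∅ := by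
  refine Set.eq_empty_of_forall_notMem fun z ⟨(hzA : infDist z A ≤ ε), (hzB : infDist z B ≤ ε)⟩ =>
    ?_
  linarith [le_infDist_add_infDist hA hB hAB z]

end Enlargement

namespace ZeroAtInftyContinuousMap

variable {α β : Type*} [TopologicalSpace α]

lemma dist_apply_le [PseudoMetricSpace β] [Zero β] (f g : C₀(α, β)) (a : α) :
    dist (f a) (g a) ≤ dist f g :=
  BoundedContinuousFunction.dist_coe_le_dist (f := f.toBCF) (g := g.toBCF) a

lemma norm_apply_le [SeminormedAddCommGroup β] (f : C₀(α, β)) (a : α) : ‖f a‖ ≤ ‖f‖ := by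
  simpa using dist_apply_le f 0 a

noncomputable def evalCLM (𝕜 : Type*) [NormedField 𝕜] [SeminormedAddCommGroup β]
    [NormedSpace 𝕜 β] (a : α) : C₀(α, β) →L[𝕜] β :=
  LinearMap.mkContinuous
    { toFun := fun f => f a
      map_add' := fun _ _ => rfl
      map_smul' := fun _ _ => rfl }
    1 fun f => by simpa using norm_apply_le f a

@[simp]
lemma evalCLM_apply (𝕜 : Type*) [NormedField 𝕜] [SeminormedAddCommGroup β] [NormedSpace 𝕜 β]
    (a : α) (f : C₀(α, β)) : evalCLM 𝕜 a f = f a :=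
  rfl

def single [DiscreteTopology α] [DecidableEq α] [TopologicalSpace β] [Zero β] (a : α) (b : β) :
    C₀(α, β) where
  toFun i := if i = a then b else 0
  continuous_toFun := continuous_of_discreteTopology
  zero_at_infty' := by
    rw [Filter.cocompact_eq_cofinite]
    refine tendsto_const_nhds.congr' ?_
    filter_upwards [Filter.eventually_cofinite_ne a] with i hi
    simp [hi]

lemma single_apply [DiscreteTopology α] [DecidableEq α] [TopologicalSpace β] [Zero β]
    (a i : α) (b : β) : single a b i = if i = a then b else 0 :=
  rfl

end ZeroAtInftyContinuousMap

open ZeroAtInftyContinuousMap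

noncomputable def aBound (i : ℕ+) : ℝ := (1 / 2) * (1 + 1 / (i : ℝ))

lemma aBound_pos (i : ℕ+) : 0 < aBound i := by
  unfold aBound
  positivity

lemma aBound_le_one (i : ℕ+) : aBound i ≤ 1 := by
  have hi : 1 / (i : ℝ) ≤ 1 := div_le_one_of_le₀ (Nat.one_le_cast.2 i.pos) (by positivity)
  unfold aBound
  linarith

lemma mem_aSgn {s : ℝ} {n : ℕ+} {x : C₀(ℕ+, ℝ)} :
    x ∈ aSgn s n ↔ (∀ i, |x i| ≤ aBound i) ∧ x n = s * aBound n :=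
  Iff.rfl

lemma aSgn_eq_inter_preimage (s : ℝ) (n : ℕ+) :
    aSgn s n = (⋂ i, evalCLM ℝ i ⁻¹' closedBall 0 (aBound i)) ∩
      evalCLM ℝ n ⁻¹' {s * aBound n} := by
  ext x
  simp [mem_aSgn]

lemma isClosed_aSgn (s : ℝ) (n : ℕ+) : IsClosed (aSgn s n) := by
  rw [aSgn_eq_inter_preimage]
  exact (isClosed_iInter fun i => isClosed_closedBall.preimage (evalCLM ℝ i).continuous).inter
    (isClosed_singleton.preimage (evalCLM ℝ n).continuous)

lemma convex_aSgn (s : ℝ) (n : ℕ+) : Convex ℝ (aSgn s n) := by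
  rw [aSgn_eq_inter_preimage]
  exact (convex_iInter fun i =>
      (convex_closedBall _ _).linear_preimage (evalCLM ℝ i).toLinearMap).inter
    ((convex_singleton _).linear_preimage (evalCLM ℝ n).toLinearMap)

lemma single_mem_aSgn {s : ℝ} (hs : |s| ≤ 1) (n : ℕ+) : single n (s * aBound n) ∈ aSgn s n := by
  refine mem_aSgn.2 ⟨fun i => ?_, by simp [single_apply]⟩
  rw [single_apply]
  split_ifs with hi
  · subst hi
    rw [abs_mul, abs_of_pos (aBound_pos i)]
    exact mul_le_of_le_one_left (aBound_pos i).le hs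
  · simpa using (aBound_pos i).le

lemma aSgn_subset_closedBall (s : ℝ) (n : ℕ+) : aSgn s n ⊆ closedBall 0 1 := by
  intro x hx
  rw [mem_closedBall_zero_iff, ← norm_toBCF_eq_norm, BoundedContinuousFunction.norm_le zero_le_one]
  exact fun i => ((mem_aSgn.1 hx).1 i).trans (aBound_le_one i)

lemma abs_sub_mul_aBound_le_dist {s t : ℝ} {n : ℕ+} {x y : C₀(ℕ+, ℝ)} (hx : x ∈ aSgn s n)
    (hy : y ∈ aSgn t n) : |s - t| * aBound n ≤ dist x y :=
  calc |s - t| * aBound n = dist (x n) (y n) := by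
        rw [Real.dist_eq, (mem_aSgn.1 hx).2, (mem_aSgn.1 hy).2, ← sub_mul, abs_mul,
          abs_of_pos (aBound_pos n)]
    _ ≤ dist x y := dist_apply_le x y n

/-- In `c₀`, the sets `aₙ⁺` and `aₙ⁻` are nonempty closed convex subsets of the closed unit
ball, and for every `0 ≤ ε ≤ 1/2` their `ε`-enlargements are disjoint; in particular
`aₙ⁺ ∩ aₙ⁻ = ∅`. -/
theorem c0_example_disjoint_enlargements :
    (∀ n : ℕ+, (aSgn 1 n).Nonempty ∧ IsClosed (aSgn 1 n) ∧ Convex ℝ (aSgn 1 n) ∧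
      aSgn 1 n ⊆ closedBall 0 1) ∧
    (∀ n : ℕ+, (aSgn (-1) n).Nonempty ∧ IsClosed (aSgn (-1) n) ∧ Convex ℝ (aSgn (-1) n) ∧
      aSgn (-1) n ⊆ closedBall 0 1) ∧
    (∀ ε : ℝ, 0 ≤ ε → ε ≤ 1 / 2 →
      ∀ n : ℕ+, enl (aSgn 1 n) ε ∩ enl (aSgn (-1) n) ε = ∅) ∧
    ∀ n : ℕ+, aSgn 1 n ∩ aSgn (-1) n = ∅ := by
  have hprops : ∀ s : ℝ, |s| ≤ 1 → ∀ n : ℕ+, (aSgn s n).Nonempty ∧ IsClosed (aSgn s n) ∧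
      Convex ℝ (aSgn s n) ∧ aSgn s n ⊆ closedBall 0 1 := fun s hs n =>
    ⟨⟨_, single_mem_aSgn hs n⟩, isClosed_aSgn s n, convex_aSgn s n, aSgn_subset_closedBall s n⟩
  have hsep : ∀ n : ℕ+, ∀ x ∈ aSgn 1 n, ∀ y ∈ aSgn (-1) n, 2 * aBound n ≤ dist x y :=
    fun n x hx y hy => (show |(1 : ℝ) - -1| = 2 by norm_num) ▸ abs_sub_mul_aBound_le_dist hx hy
  have hdisj : ∀ ε : ℝ, 0 ≤ ε → ε ≤ 1 / 2 →
      ∀ n : ℕ+, enl (aSgn 1 n) ε ∩ enl (aSgn (-1) n) ε = ∅ := fun ε _ hε n => by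
    have hgap : 1 < 2 * aBound n := by
      unfold aBound
      have : (0 : ℝ) < 1 / (n : ℝ) := by positivity
      linarith
    exact enl_inter_enl_eq_empty (hprops 1 (by norm_num) n).1 (hprops (-1) (by norm_num) n).1
      (hsep n) (by linarith)
  refine ⟨hprops 1 (by norm_num), hprops (-1) (by norm_num), hdisj, fun n => ?_⟩
  exact Set.subset_eq_empty (Set.inter_subset_inter (subset_enl le_rfl) (subset_enl le_rfl))
    (hdisj 0 le_rfl (by norm_num) n)
end

section
/- In the real space c₀ of sequences (indexed by integers i ≥ 1) converging to 0 with the supremum norm, for each integer n ≥ 1 define a_n^+ = {x ∈ c₀ : |x_i| ≤ (1/2)(1 + 1/i) for all i ≥ 1, and x_n = (1/2)(1 + 1/n)} and a_n^- = {x ∈ c₀ : |x_i| ≤ (1/2)(1 + 1/i) for all i ≥ 1, and x_n = −(1/2)(1 + 1/n)}. Then for every choice of signs z : {n∈ℕ : n ≥ 1} → {+1, −1}, the sequence x defined by x_i = z(i)/(2i) belongs to c₀ and satisfies dist(x, a_n^{z(n)}) ≤ 1/2 for every n ≥ 1; hence ⋂_{n≥1} (a_n^{z(n)})^{1/2} ≠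 ∅ (here a_n^{+1} means a_n^+ and a_n^{−1} means a_n^-). -/
/-!
Put `x_i = z(i)/(2i)`, so `|x_i| ≤ 1/(2i) ≤ (1/2)(1 + 1/i)`. Overwriting the `n`-th coordinate of
`x` by `z(n)·(1/2)(1 + 1/n)` gives a point of `aₙ^{z(n)}`, and since only one coordinate changes,
its sup-distance to `x` is `|z(n)/(2n) - z(n)(1/2)(1 + 1/n)| = 1/2`.
-/

open Metric ZeroAtInfty

open Filter Topology

namespace ZeroAtInftyContinuousMap

variable {α β : Type*} [TopologicalSpace α] [DiscreteTopology α]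

section Construction

variable [TopologicalSpace β] [Zero β]

def ofTendstoCofinite (f : α → β) (hf : Tendsto f cofinite (𝓝 0)) : C₀(α, β) where
  toFun := f
  continuous_toFun := continuous_of_discreteTopology
  zero_at_infty' := by rwa [cocompact_eq_cofinite]

variable [DecidableEq α]

def update (f : C₀(α, β)) (a : α) (b : β) : C₀(α, β) :=
  ofTendstoCofinite (Function.update f a b) <|
    (cocompact_eq_cofinite α ▸ zero_at_infty f).congr' <|
      (eventually_cofinite_ne a).mono fun _ hx => (Function.update_of_ne hx b f).symm

@[simp]
theorem coe_update (f : C₀(α, β)) (a : α) (b : β) : ⇑(f.update a b) = Function.update f a b :=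
  rfl

end Construction

theorem dist_update_self [MetricSpace β] [Zero β] [DecidableEq α] (f : C₀(α, β)) (a : α)
    (b : β) : dist (f.update a b) f = dist b (f a) := by
  refine le_antisymm ?_ ?_
  · rw [← dist_toBCF_eq_dist, BoundedContinuousFunction.dist_le dist_nonneg]
    intro x
    rcases eq_or_ne x a with rfl | hx
    · simp
    · simp [hx]
  · simpa using (f.update a b).toBCF.dist_coe_le_dist (g := f.toBCF) a

end ZeroAtInftyContinuousMap

open ZeroAtInftyContinuousMap

theorem tendsto_div_two_mul_cofinite {z : ℕ+ → ℝ} (hz : ∀ i, |z i| ≤ 1) :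
    Tendsto (fun i : ℕ+ => z i / (2 * (i : ℝ))) cofinite (𝓝 0) := by
  have h_inv : Tendsto (fun i : ℕ+ => ((i : ℕ) : ℝ)⁻¹) cofinite (𝓝 0) :=
    tendsto_inv_atTop_nhds_zero_nat.comp
      (Nat.cofinite_eq_atTop ▸ PNat.coe_injective.tendsto_cofinite)
  refine squeeze_zero_norm (fun i => ?_) h_inv
  have h2i : (0 : ℝ) < 2 * i := by positivity
  rw [Real.norm_eq_abs, abs_div, abs_of_pos h2i, div_le_iff₀ h2i]
  have : ((i : ℕ) : ℝ)⁻¹ * (2 * i) = 2 := by field_simp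
  linarith [hz i]

theorem update_mem_aSgn {x : C₀(ℕ+, ℝ)} (hx : ∀ i : ℕ+, |x i| ≤ (1 / 2) * (1 + 1 / (i : ℝ)))
    {s : ℝ} (hs : |s| ≤ 1) (n : ℕ+) :
    x.update n (s * ((1 / 2) * (1 + 1 / (n : ℝ)))) ∈ aSgn s n := by
  refine ⟨fun i => ?_, by simp⟩
  rcases eq_or_ne i n with rfl | hi
  · have : (0 : ℝ) ≤ 1 / 2 * (1 + 1 / (i : ℝ)) := by positivity
    simpa only [coe_update, Function.update_self, abs_mul, abs_of_nonneg this, one_mul] using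
      mul_le_mul_of_nonneg_right hs this
  · simpa [hi] using hx i

theorem infDist_aSgn_le {x : C₀(ℕ+, ℝ)} (hx : ∀ i : ℕ+, |x i| ≤ (1 / 2) * (1 + 1 / (i : ℝ)))
    {s : ℝ} (hs : |s| ≤ 1) (n : ℕ+) :
    infDist x (aSgn s n) ≤ |x n - s * ((1 / 2) * (1 + 1 / (n : ℝ)))| := by
  calc infDist x (aSgn s n) ≤ dist x (x.update n (s * ((1 / 2) * (1 + 1 / (n : ℝ))))) :=
        infDist_le_dist_of_mem (update_mem_aSgn hx hs n)
    _ = _ := by rw [dist_comm, dist_update_self, dist_comm, Real.dist_eq]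

/-- For any choice of signs `z(n) ∈ {+1, -1}`, the sequence `x_i = z(i)/(2i)` belongs to `c₀`
and satisfies `dist(x, aₙ^{z(n)}) ≤ 1/2` for every `n`; hence `⋂ₙ (aₙ^{z(n)})^{1/2} ≠ ∅`. -/
theorem c0_example_choice_of_signs_meets_half_enlargements
    (z : ℕ+ → ℝ) (hz : ∀ n, z n = 1 ∨ z n = -1) :
    (∃ x : C₀(ℕ+, ℝ), (∀ i : ℕ+, x i = z i / (2 * (i : ℝ))) ∧
      ∀ n : ℕ+, infDist x (aSgn (z n) n) ≤ 1 / 2) ∧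
    (⋂ n : ℕ+, enl (aSgn (z n) n) (1 / 2)).Nonempty := by
  have hz_abs : ∀ i, |z i| = 1 := fun i => by rcases hz i with h | h <;> simp [h]
  set x := ofTendstoCofinite _ (tendsto_div_two_mul_cofinite fun i => (hz_abs i).le)
  have hx : ∀ i : ℕ+, x i = z i / (2 * (i : ℝ)) := fun _ => rfl
  have hx_bound : ∀ i : ℕ+, |x i| ≤ (1 / 2) * (1 + 1 / (i : ℝ)) := by
    intro i
    rw [hx, abs_div, hz_abs, abs_of_pos (by positivity)]
    calc 1 / (2 * (i : ℝ)) = 1 / 2 * (1 / i) := by ring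
      _ ≤ 1 / 2 * (1 + 1 / i) := by gcongr; linarith
  have hdist : ∀ n : ℕ+, infDist x (aSgn (z n) n) ≤ 1 / 2 := by
    intro n
    have : x n - z n * ((1 / 2) * (1 + 1 / (n : ℝ))) = -(z n / 2) := by
      rw [hx]; field_simp; ring
    refine (infDist_aSgn_le hx_bound (hz_abs n).le n).trans_eq ?_
    rw [this, abs_neg, abs_div, hz_abs]; norm_num
  exact ⟨⟨x, hx, hdist⟩, x, Set.mem_iInter.2 hdist⟩
end
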